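/- arXiv:1912.13114 — 3 statements merged into one kernel-verified Lean document; each statement's English description precedes it below -/
import Mathlib

section
/- Let d ≥ 3, let σ be a smooth defining function for Σ on an open set U ⊆ ℝ^d, and suppose that for some integer k with 1 ≤ k ≤ d − 1 there is a smooth function A on U with S(σ) = 1 + σ^k · A. Then there exist an open set V with Σ ⊆ V ⊆ U and a smooth function f on V such that σ' := σ·(1 + f·σ^k) is again a defining function for Σ on V and S(σ') = 1 + σ^{k+1} · A' on V for some smooth function A'. (The order-by-order improvement step, valid precisely for k < d, used to construct asymptotic solutions of the singular Yamabe problem; the construction fails at k = d, where the obstruction density appears.) -/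
open RealInnerProductSpace

/-- The flat Euclidean Laplacian of `σ : ℝ^d → ℝ`. -/
noncomputable def flatLaplacian {d : ℕ} (σ : EuclideanSpace ℝ (Fin d) → ℝ)
    (x : EuclideanSpace ℝ (Fin d)) : ℝ :=
  ∑ i : Fin d, fderiv ℝ (fun y => fderiv ℝ σ y (EuclideanSpace.single i 1)) x
    (EuclideanSpace.single i 1)

/-- The flat S-curvature `S(σ) = ‖∇σ‖² − (2σ/d)Δσ`. -/
noncomputable def Scurv {d : ℕ} (σ : EuclideanSpace ℝ (Fin d) → ℝ)
    (x : EuclideanSpace ℝ (Fin d)) : ℝ :=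
  ‖gradient σ x‖ ^ 2 - (2 * σ x / d) * flatLaplacian σ x

/-- `σ` is a smooth defining function for `Z` on `U`. -/
def IsDefiningFn {d : ℕ} (σ : EuclideanSpace ℝ (Fin d) → ℝ)
    (U Z : Set (EuclideanSpace ℝ (Fin d))) : Prop :=
  ContDiffOn ℝ (⊤ : ℕ∞) σ U ∧ Z = {x ∈ U | σ x = 0} ∧ ∀ x ∈ Z, fderiv ℝ σ x ≠ 0

/-!
Write `σ' = σ (1 + f σ^k) = σ + f σ^(k+1)`. Its first derivatives agree with those of `σ` up to
`O(σ^k)`, and expanding `S(σ') = |∇σ'|² - (2σ'/d) Δσ'` gives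
`S(σ') = S(σ) + 2 (k + 1) (1 - k/d) f σ^k |∇σ|² + O(σ^(k+1))`,
the `σ^k` contributions coming from `|∇σ'|²` and from `σ Δσ'` (through `∂ᵢ∂ᵢ σ^(k+1)`).
For `k < d` the coefficient is nonzero, and `|∇σ|² = S(σ) = 1` on `Σ`, so
`f = -A / (2 (k + 1) (1 - k/d) |∇σ|²)` cancels the term `σ^k A` of `S(σ)` wherever `∇σ ≠ 0`.
Shrinking further to where `1 + f σ^k ≠ 0` keeps `σ'` a defining function for `Σ`.
-/

variable {d : ℕ} {σ f u v : EuclideanSpace ℝ (Fin d) → ℝ} {x : EuclideanSpace ℝ (Fin d)}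

noncomputable def partialDeriv (i : Fin d) (u : EuclideanSpace ℝ (Fin d) → ℝ)
    (x : EuclideanSpace ℝ (Fin d)) : ℝ :=
  fderiv ℝ u x (EuclideanSpace.single i 1)

noncomputable def gradDot (u v : EuclideanSpace ℝ (Fin d) → ℝ) (x : EuclideanSpace ℝ (Fin d)) :
    ℝ :=
  ∑ i, partialDeriv i u x * partialDeriv i v x

theorem flatLaplacian_eq_sum (u : EuclideanSpace ℝ (Fin d) → ℝ) (x : EuclideanSpace ℝ (Fin d)) :
    flatLaplacian u x = ∑ i, partialDeriv i (partialDeriv i u) x :=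
  rfl

theorem norm_gradient_sq_eq_gradDot (u : EuclideanSpace ℝ (Fin d) → ℝ)
    (x : EuclideanSpace ℝ (Fin d)) : ‖gradient u x‖ ^ 2 = gradDot u u x := by
  have h : ∀ i, partialDeriv i u x = gradient u x i := fun i => by
    rw [partialDeriv, ← InnerProductSpace.toDual_symm_apply, EuclideanSpace.inner_single_right]
    simp [gradient]
  rw [EuclideanSpace.norm_eq, Real.sq_sqrt (by positivity), gradDot]
  simp [h, sq]

theorem Scurv_eq (u : EuclideanSpace ℝ (Fin d) → ℝ) (x : EuclideanSpace ℝ (Fin d)) :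
    Scurv u x = gradDot u u x - 2 * u x / d * flatLaplacian u x := by
  rw [Scurv, norm_gradient_sq_eq_gradDot]

theorem ContDiffOn.partialDeriv {V : Set (EuclideanSpace ℝ (Fin d))} {n : WithTop ℕ∞}
    (hu : ContDiffOn ℝ (n + 1) u V) (hV : IsOpen V) (i : Fin d) :
    ContDiffOn ℝ n (_root_.partialDeriv i u) V :=
  (hu.fderiv_of_isOpen hV le_rfl).clm_apply contDiffOn_const

theorem ContDiffAt.partialDeriv {n : WithTop ℕ∞} (hu : ContDiffAt ℝ (n + 1) u x) (i : Fin d) :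
    ContDiffAt ℝ n (_root_.partialDeriv i u) x :=
  hu.fderiv_right_succ.clm_apply contDiffAt_const

theorem partialDeriv_add (hu : DifferentiableAt ℝ u x) (hv : DifferentiableAt ℝ v x) (i : Fin d) :
    partialDeriv i (fun y => u y + v y) x = partialDeriv i u x + partialDeriv i v x := by
  simp [partialDeriv, fderiv_fun_add hu hv]

theorem partialDeriv_mul (hu : DifferentiableAt ℝ u x) (hv : DifferentiableAt ℝ v x) (i : Fin d) :
    partialDeriv i (fun y => u y * v y) x = u x * partialDeriv i v x + v x * partialDeriv i u x := by
  simp [partialDeriv, fderiv_fun_mul hu hv]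

theorem partialDeriv_pow (hu : DifferentiableAt ℝ u x) (n : ℕ) (i : Fin d) :
    partialDeriv i (fun y => u y ^ n) x = n * u x ^ (n - 1) * partialDeriv i u x := by
  simp [partialDeriv, fderiv_fun_pow n hu, mul_assoc]

theorem partialDeriv_const (c : ℝ) (i : Fin d) :
    partialDeriv i (fun _ : EuclideanSpace ℝ (Fin d) => c) x = 0 := by
  simp [partialDeriv]

theorem partialDeriv_mul_one_add_mul_pow (hσ : DifferentiableAt ℝ σ x)
    (hf : DifferentiableAt ℝ f x) (k : ℕ) (i : Fin d) :
    partialDeriv i (fun y => σ y * (1 + f y * σ y ^ k)) x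
      = (1 + (k + 1) * f x * σ x ^ k) * partialDeriv i σ x
        + σ x ^ (k + 1) * partialDeriv i f x := by
  have hφ : (fun y => σ y * (1 + f y * σ y ^ k)) = fun y => σ y + f y * σ y ^ (k + 1) := by
    funext y; ring
  rw [hφ, partialDeriv_add hσ (by fun_prop), partialDeriv_mul hf (by fun_prop),
    partialDeriv_pow hσ]
  push_cast
  ring

theorem partialDeriv_partialDeriv_mul_one_add_mul_pow (hσ : ContDiffAt ℝ 2 σ x)
    (hf : ContDiffAt ℝ 2 f x) (k : ℕ) (i : Fin d) :
    partialDeriv i (partialDeriv i (fun y => σ y * (1 + f y * σ y ^ k))) x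
      = (1 + (k + 1) * f x * σ x ^ k) * partialDeriv i (partialDeriv i σ) x
        + 2 * (k + 1) * σ x ^ k * partialDeriv i σ x * partialDeriv i f x
        + k * (k + 1) * f x * σ x ^ (k - 1) * partialDeriv i σ x ^ 2
        + σ x ^ (k + 1) * partialDeriv i (partialDeriv i f) x := by
  have hev : partialDeriv i (fun y => σ y * (1 + f y * σ y ^ k)) =ᶠ[nhds x]
      fun y => (1 + (k + 1) * f y * σ y ^ k) * partialDeriv i σ y
        + σ y ^ (k + 1) * partialDeriv i f y := by
    filter_upwards [hσ.eventually (by simp), hf.eventually (by simp)] with y hσy hfy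
    exact partialDeriv_mul_one_add_mul_pow (hσy.differentiableAt (by simp))
      (hfy.differentiableAt (by simp)) k i
  have hσ1 : DifferentiableAt ℝ σ x := hσ.differentiableAt (by simp)
  have hf1 : DifferentiableAt ℝ f x := hf.differentiableAt (by simp)
  have hσ2 : DifferentiableAt ℝ (partialDeriv i σ) x :=
    (hσ.partialDeriv (n := 1) i).differentiableAt one_ne_zero
  have hf2 : DifferentiableAt ℝ (partialDeriv i f) x :=
    (hf.partialDeriv (n := 1) i).differentiableAt one_ne_zero
  rw [partialDeriv, hev.fderiv_eq, ← partialDeriv]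
  simp (disch := fun_prop) only [partialDeriv_add, partialDeriv_mul, partialDeriv_pow,
    partialDeriv_const]
  push_cast
  ring

theorem gradDot_mul_one_add_mul_pow (hσ : DifferentiableAt ℝ σ x) (hf : DifferentiableAt ℝ f x)
    (k : ℕ) :
    gradDot (fun y => σ y * (1 + f y * σ y ^ k)) (fun y => σ y * (1 + f y * σ y ^ k)) x
      = (1 + (k + 1) * f x * σ x ^ k) ^ 2 * gradDot σ σ x
        + 2 * (1 + (k + 1) * f x * σ x ^ k) * σ x ^ (k + 1) * gradDot σ f x
        + σ x ^ (2 * k + 2) * gradDot f f x := by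
  simp only [gradDot, partialDeriv_mul_one_add_mul_pow hσ hf, Finset.mul_sum,
    ← Finset.sum_add_distrib]
  exact Finset.sum_congr rfl fun i _ => by ring

theorem flatLaplacian_mul_one_add_mul_pow (hσ : ContDiffAt ℝ 2 σ x) (hf : ContDiffAt ℝ 2 f x)
    (k : ℕ) :
    flatLaplacian (fun y => σ y * (1 + f y * σ y ^ k)) x
      = (1 + (k + 1) * f x * σ x ^ k) * flatLaplacian σ x
        + 2 * (k + 1) * σ x ^ k * gradDot σ f x
        + k * (k + 1) * f x * σ x ^ (k - 1) * gradDot σ σ x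
        + σ x ^ (k + 1) * flatLaplacian f x := by
  simp only [flatLaplacian_eq_sum, gradDot, partialDeriv_partialDeriv_mul_one_add_mul_pow hσ hf,
    Finset.mul_sum, ← Finset.sum_add_distrib]
  exact Finset.sum_congr rfl fun i _ => by ring

noncomputable def scurvRemainder (k : ℕ) (σ f : EuclideanSpace ℝ (Fin d) → ℝ)
    (x : EuclideanSpace ℝ (Fin d)) : ℝ :=
  (k + 1) ^ 2 * f x ^ 2 * σ x ^ (k - 1) * gradDot σ σ x
    + 2 * (1 + (k + 1) * f x * σ x ^ k) * gradDot σ f x + σ x ^ (k + 1) * gradDot f f x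
    - 2 / d * (((k + 2) * f x + (k + 1) * f x ^ 2 * σ x ^ k) * flatLaplacian σ x
      + 2 * (k + 1) * (1 + f x * σ x ^ k) * gradDot σ f x
      + k * (k + 1) * f x ^ 2 * σ x ^ (k - 1) * gradDot σ σ x
      + (1 + f x * σ x ^ k) * σ x * flatLaplacian f x)

theorem Scurv_mul_one_add_mul_pow {k : ℕ} (hk : 1 ≤ k) (hσ : ContDiffAt ℝ 2 σ x)
    (hf : ContDiffAt ℝ 2 f x) :
    Scurv (fun y => σ y * (1 + f y * σ y ^ k)) x
      = Scurv σ x + 2 * (k + 1) * (1 - k / d) * f x * σ x ^ k * gradDot σ σ x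
        + σ x ^ (k + 1) * scurvRemainder k σ f x := by
  rw [Scurv_eq, Scurv_eq, gradDot_mul_one_add_mul_pow (hσ.differentiableAt (by simp))
    (hf.differentiableAt (by simp)), flatLaplacian_mul_one_add_mul_pow hσ hf, scurvRemainder]
  obtain ⟨m, rfl⟩ : ∃ m, k = m + 1 := ⟨k - 1, by omega⟩
  simp only [Nat.add_sub_cancel]
  push_cast
  ring

section Smoothness

variable {V : Set (EuclideanSpace ℝ (Fin d))} {n : WithTop ℕ∞}

theorem ContDiffOn.gradDot (hu : ContDiffOn ℝ (n + 1) u V) (hv : ContDiffOn ℝ (n + 1) v V)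
    (hV : IsOpen V) : ContDiffOn ℝ n (_root_.gradDot u v) V :=
  .sum fun i _ => (hu.partialDeriv hV i).mul (hv.partialDeriv hV i)

theorem ContDiffOn.flatLaplacian (hu : ContDiffOn ℝ (n + 1 + 1) u V) (hV : IsOpen V) :
    ContDiffOn ℝ n (_root_.flatLaplacian u) V :=
  .sum fun i _ => ((hu.partialDeriv hV i).partialDeriv hV i)

theorem ContDiffOn.scurvRemainder (hσ : ContDiffOn ℝ (n + 1 + 1) σ V)
    (hf : ContDiffOn ℝ (n + 1 + 1) f V) (hV : IsOpen V) (k : ℕ) :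
    ContDiffOn ℝ n (_root_.scurvRemainder k σ f) V := by
  have hσn : ContDiffOn ℝ n σ V := hσ.of_le (by simp [add_assoc])
  have hfn : ContDiffOn ℝ n f V := hf.of_le (by simp [add_assoc])
  have hG := (hσ.of_le le_self_add).gradDot (hσ.of_le le_self_add) hV
  have hT := (hσ.of_le le_self_add).gradDot (hf.of_le le_self_add) hV
  have hF := (hf.of_le le_self_add).gradDot (hf.of_le le_self_add) hV
  have hL := hσ.flatLaplacian hV
  have hM := hf.flatLaplacian hV
  unfold _root_.scurvRemainder
  fun_prop

end Smoothness

theorem IsDefiningFn.mul_of_ne_zero {U V Z : Set (EuclideanSpace ℝ (Fin d))}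
    (hσ : IsDefiningFn σ U Z) (hV : IsOpen V) (hVU : V ⊆ U) (hZV : Z ⊆ V)
    (hu : ContDiffOn ℝ (⊤ : ℕ∞) u V) (hu0 : ∀ x ∈ V, u x ≠ 0) :
    IsDefiningFn (fun x => σ x * u x) V Z := by
  obtain ⟨hσs, rfl, hdσ⟩ := hσ
  refine ⟨(hσs.mono hVU).mul hu, ?_, fun x hx => ?_⟩
  · ext x
    constructor
    · rintro ⟨hxU, hσx⟩
      exact ⟨hZV ⟨hxU, hσx⟩, by simp [hσx]⟩
    · rintro ⟨hxV, hφx⟩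
      exact ⟨hVU hxV, (mul_eq_zero.1 hφx).resolve_right (hu0 x hxV)⟩
  · have hdiff : ∀ g : EuclideanSpace ℝ (Fin d) → ℝ, ContDiffOn ℝ (⊤ : ℕ∞) g V →
        DifferentiableAt ℝ g x := fun g hg =>
      (hg.contDiffAt (hV.mem_nhds (hZV hx))).differentiableAt (by simp)
    rw [fderiv_fun_mul (hdiff σ (hσs.mono hVU)) (hdiff u hu), hx.2, zero_smul, zero_add]
    exact smul_ne_zero (hu0 x (hZV hx)) (hdσ x hx)

theorem gradDot_self_eq_one_of_Scurv_eq {k : ℕ} (hk : k ≠ 0) {a : ℝ}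
    (hS : Scurv σ x = 1 + σ x ^ k * a) (hσx : σ x = 0) : gradDot σ σ x = 1 := by
  simpa [Scurv_eq, hσx, zero_pow hk] using hS

theorem statement3_general (d : ℕ)
    (U Z : Set (EuclideanSpace ℝ (Fin d))) (hU : IsOpen U)
    (σ A : EuclideanSpace ℝ (Fin d) → ℝ) (hσ : IsDefiningFn σ U Z)
    (k : ℕ) (hk1 : 1 ≤ k) (hkd : k ≤ d - 1)
    (hA : ContDiffOn ℝ (⊤ : ℕ∞) A U)
    (hS : ∀ x ∈ U, Scurv σ x = 1 + σ x ^ k * A x) :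
    ∃ (V : Set (EuclideanSpace ℝ (Fin d))) (f : EuclideanSpace ℝ (Fin d) → ℝ),
      IsOpen V ∧ Z ⊆ V ∧ V ⊆ U ∧ ContDiffOn ℝ (⊤ : ℕ∞) f V ∧
      IsDefiningFn (fun x => σ x * (1 + f x * σ x ^ k)) V Z ∧
      ∃ A' : EuclideanSpace ℝ (Fin d) → ℝ, ContDiffOn ℝ (⊤ : ℕ∞) A' V ∧
        ∀ x ∈ V, Scurv (fun y => σ y * (1 + f y * σ y ^ k)) x
          = 1 + σ x ^ (k + 1) * A' x := by
  have hσs : ContDiffOn ℝ (⊤ : ℕ∞) σ U := hσ.1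
  set c : ℝ := 2 * (k + 1) * (1 - k / d)
  have hc : c ≠ 0 := by
    have hd : (d : ℝ) ≠ 0 := by exact_mod_cast (by omega : d ≠ 0)
    refine mul_ne_zero (by positivity) (sub_ne_zero.2 fun h => ?_)
    rw [eq_div_iff hd, one_mul] at h
    exact (by omega : d ≠ k) (mod_cast h)
  set f := fun y => -A y / (c * gradDot σ σ y)
  set V₀ := U ∩ gradDot σ σ ⁻¹' {0}ᶜ
  have hG : ContDiffOn ℝ (⊤ : ℕ∞) (gradDot σ σ) U := hσs.gradDot hσs hU
  have hV₀ : IsOpen V₀ := hG.continuousOn.isOpen_inter_preimage hU isOpen_compl_singleton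
  have hf₀ : ContDiffOn ℝ (⊤ : ℕ∞) f V₀ :=
    (hA.mono Set.inter_subset_left).neg.div
      (contDiffOn_const.mul (hG.mono Set.inter_subset_left)) fun x hx => mul_ne_zero hc hx.2
  have hu₀ : ContDiffOn ℝ (⊤ : ℕ∞) (fun y => 1 + f y * σ y ^ k) V₀ :=
    contDiffOn_const.add (hf₀.mul ((hσs.mono Set.inter_subset_left).pow k))
  set V := V₀ ∩ (fun y => 1 + f y * σ y ^ k) ⁻¹' {0}ᶜ
  have hV : IsOpen V := hu₀.continuousOn.isOpen_inter_preimage hV₀ isOpen_compl_singleton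
  have hVU : V ⊆ U := fun x hx => hx.1.1
  have hZV : Z ⊆ V := by
    intro x hx
    obtain ⟨hxU, hσx⟩ : x ∈ U ∧ σ x = 0 := by rwa [hσ.2.1] at hx
    have hGx := gradDot_self_eq_one_of_Scurv_eq (by omega) (hS x hxU) hσx
    exact ⟨⟨hxU, by simp [hGx]⟩, by simp [hσx, zero_pow (by omega : k ≠ 0)]⟩
  have hσV : ContDiffOn ℝ (⊤ : ℕ∞) σ V := hσs.mono hVU
  have hfV : ContDiffOn ℝ (⊤ : ℕ∞) f V := hf₀.mono Set.inter_subset_left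
  refine ⟨V, f, hV, hZV, hVU, hfV, hσ.mul_of_ne_zero hV hVU hZV
    (hu₀.mono Set.inter_subset_left) fun x hx => hx.2, scurvRemainder k σ f,
    hσV.scurvRemainder hfV hV k, fun x hx => ?_⟩
  have hfG : c * f x * gradDot σ σ x = -A x := by
    have hGx : gradDot σ σ x ≠ 0 := hx.1.2
    simp only [f]
    field_simp
  rw [Scurv_mul_one_add_mul_pow hk1 ((hσV.contDiffAt (hV.mem_nhds hx)).of_le (by decide))
    ((hfV.contDiffAt (hV.mem_nhds hx)).of_le (by decide)), hS x (hVU hx)]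
  linear_combination σ x ^ k * hfG

/-- the order-by-order improvement step: if `S(σ) = 1 + σ^k·A` with
`1 ≤ k ≤ d − 1`, then there is a correction `σ' = σ·(1 + f·σ^k)`, on a neighbourhood `V`
of `Z`, with `S(σ') = 1 + σ^{k+1}·A'`. -/
theorem statement3 (d : ℕ) (hd : 3 ≤ d)
    (U Z : Set (EuclideanSpace ℝ (Fin d))) (hU : IsOpen U)
    (σ A : EuclideanSpace ℝ (Fin d) → ℝ) (hσ : IsDefiningFn σ U Z)
    (k : ℕ) (hk1 : 1 ≤ k) (hkd : k ≤ d - 1)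
    (hA : ContDiffOn ℝ (⊤ : ℕ∞) A U)
    (hS : ∀ x ∈ U, Scurv σ x = 1 + σ x ^ k * A x) :
    ∃ (V : Set (EuclideanSpace ℝ (Fin d))) (f : EuclideanSpace ℝ (Fin d) → ℝ),
      IsOpen V ∧ Z ⊆ V ∧ V ⊆ U ∧ ContDiffOn ℝ (⊤ : ℕ∞) f V ∧
      IsDefiningFn (fun x => σ x * (1 + f x * σ x ^ k)) V Z ∧
      ∃ A' : EuclideanSpace ℝ (Fin d) → ℝ, ContDiffOn ℝ (⊤ : ℕ∞) A' V ∧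
        ∀ x ∈ V, Scurv (fun y => σ y * (1 + f y * σ y ^ k)) x
          = 1 + σ x ^ (k + 1) * A' x :=
  statement3_general d U Z hU σ A hσ k hk1 hkd hA hS
end

section
/- Let d ≥ 3 and let σ be a smooth defining function for Σ on an open set U ⊆ ℝ^d with S(σ) > 0 everywhere on U. Set σ̂ := σ/√(S(σ)) and σ' := σ̂·(1 − (d/(4(d−1)))·(S(σ̂) − 1)). Then there exists a smooth function b on U such that S(σ') = 1 + σ² · b on U; in particular S(σ') − 1 vanishes to second order along Σ. (Flat-background case of the proposition producing a defining density unit to second order whose scale tractor restricts to the normal tractor.) -/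
open RealInnerProductSpace

/-!
The S-curvature obeys a product rule,
`S(fg) = g² S(f) + f² S(g) + 2(1 - 2/d) f g ⟨∇f, ∇g⟩`.
With `g = S(σ)^(-1/2)` it gives `S(σ̂) = 1 + σ̂ A` for a smooth `A`. Multiplying `σ̂` by
`h = 1 - c σ̂ A` then shifts `S` at first order in `σ̂` by `-2c σ̂ A` (from `h²`) and by
`-2(1 - 2/d) c σ̂ A` (from the cross term, since `|∇σ̂|² ≡ 1` mod `σ̂`); these cancel the
`σ̂ A` of `S(σ̂)` exactly when `4c(1 - 1/d) = 1`, i.e. `c = d/(4(d - 1))`.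
-/

open Filter Topology
open scoped ContDiff

section SecondDerivative

variable {𝕜 E : Type*} [NontriviallyNormedField 𝕜] [NormedAddCommGroup E] [NormedSpace 𝕜 E]
  {U : Set E} {f g : E → 𝕜} {x : E} {n m : WithTop ℕ∞}

theorem ContDiffOn.fderiv_apply_of_isOpen (hf : ContDiffOn 𝕜 n f U) (hU : IsOpen U)
    (hmn : m + 1 ≤ n) (v : E) : ContDiffOn 𝕜 m (fun y => fderiv 𝕜 f y v) U :=
  (ContinuousLinearMap.apply 𝕜 𝕜 v).contDiff.comp_contDiffOn (hf.fderiv_of_isOpen hU hmn)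

theorem fderiv_fderiv_mul_apply (hU : IsOpen U) (hf : ContDiffOn 𝕜 2 f U)
    (hg : ContDiffOn 𝕜 2 g U) (hx : x ∈ U) (v : E) :
    fderiv 𝕜 (fun y => fderiv 𝕜 (fun z => f z * g z) y v) x v
      = f x * fderiv 𝕜 (fun y => fderiv 𝕜 g y v) x v + 2 * (fderiv 𝕜 f x v * fderiv 𝕜 g x v)
        + g x * fderiv 𝕜 (fun y => fderiv 𝕜 f y v) x v := by
  have hdiff : ∀ {φ : E → 𝕜}, ContDiffOn 𝕜 1 φ U → ∀ y ∈ U, DifferentiableAt 𝕜 φ y :=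
    fun hφ y hy => (hφ.differentiableOn one_ne_zero).differentiableAt (hU.mem_nhds hy)
  have hf₁ := hdiff (hf.of_le (by norm_num))
  have hg₁ := hdiff (hg.of_le (by norm_num))
  have hDf := hdiff (hf.fderiv_apply_of_isOpen hU (by norm_num) v) x hx
  have hDg := hdiff (hg.fderiv_apply_of_isOpen hU (by norm_num) v) x hx
  have hD : (fun y => fderiv 𝕜 (fun z => f z * g z) y v)
      =ᶠ[𝓝 x] fun y => f y * fderiv 𝕜 g y v + g y * fderiv 𝕜 f y v := by
    filter_upwards [hU.mem_nhds hx] with y hy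
    simp [fderiv_fun_mul (hf₁ y hy) (hg₁ y hy)]
  rw [hD.fderiv_eq, fderiv_fun_add (f := fun y => f y * fderiv 𝕜 g y v)
    (g := fun y => g y * fderiv 𝕜 f y v) ((hf₁ x hx).mul hDg) ((hg₁ x hx).mul hDf),
    fderiv_fun_mul (hf₁ x hx) hDg, fderiv_fun_mul (hg₁ x hx) hDf]
  simp only [add_apply, smul_apply, smul_eq_mul]
  ring

end SecondDerivative

section Gradient

variable {F : Type*} [NormedAddCommGroup F] [InnerProductSpace ℝ F] [CompleteSpace F]
  {f g : F → ℝ} {x : F}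

theorem gradient_fun_mul (hf : DifferentiableAt ℝ f x) (hg : DifferentiableAt ℝ g x) :
    gradient (fun y => f y * g y) x = f x • gradient g x + g x • gradient f x := by
  simp only [gradient, fderiv_fun_mul hf hg, map_add, map_smul]

theorem gradient_one_sub_const_mul (c : ℝ) (hf : DifferentiableAt ℝ f x) :
    gradient (fun y => 1 - c * f y) x = -(c • gradient f x) := by
  simp only [gradient, fderiv_const_sub, fderiv_const_mul hf, map_neg, map_smul]

theorem contDiffOn_gradient {U : Set F} {n : WithTop ℕ∞} (hU : IsOpen U)
    (hf : ContDiffOn ℝ (n + 1) f U) : ContDiffOn ℝ n (gradient f) U :=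
  (InnerProductSpace.toDual ℝ F).symm.contDiff.comp_contDiffOn (hf.fderiv_of_isOpen hU le_rfl)

end Gradient

section FlatSCurvature

variable {d : ℕ} {U : Set (EuclideanSpace ℝ (Fin d))} {f g : EuclideanSpace ℝ (Fin d) → ℝ}
  {x : EuclideanSpace ℝ (Fin d)}

theorem sum_fderiv_mul_fderiv_single (f g : EuclideanSpace ℝ (Fin d) → ℝ) (x) :
    ∑ i : Fin d,
        fderiv ℝ f x (EuclideanSpace.single i 1) * fderiv ℝ g x (EuclideanSpace.single i 1)
      = ⟪gradient f x, gradient g x⟫ := by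
  simp only [← EuclideanSpace.basisFun_apply, ← inner_gradient_left,
    real_inner_comm _ (gradient g x), OrthonormalBasis.sum_inner_mul_inner]

theorem contDiffOn_flatLaplacian (hU : IsOpen U) (hf : ContDiffOn ℝ ∞ f U) :
    ContDiffOn ℝ ∞ (flatLaplacian f) U :=
  ContDiffOn.sum fun _ _ =>
    ((hf.fderiv_apply_of_isOpen (m := ∞) hU (by simp) _).fderiv_apply_of_isOpen hU (by simp) _)

theorem contDiffOn_Scurv (hU : IsOpen U) (hf : ContDiffOn ℝ ∞ f U) :
    ContDiffOn ℝ ∞ (Scurv f) U :=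
  (contDiffOn_gradient hU (hf.of_le (by simp))).norm_sq ℝ |>.sub
    (((contDiffOn_const.mul hf).div_const _).mul (contDiffOn_flatLaplacian hU hf))

theorem Scurv_congr_of_eventuallyEq (h : f =ᶠ[𝓝 x] g) : Scurv f x = Scurv g x := by
  have hD : ∀ v, (fun y => fderiv ℝ f y v) =ᶠ[𝓝 x] fun y => fderiv ℝ g y v :=
    fun v => (h.fderiv (𝕜 := ℝ)).mono fun y hy => by simp only [hy]
  simp only [Scurv, flatLaplacian, h.eq_of_nhds, h.gradient_eq, (hD _).fderiv_eq]

theorem norm_gradient_sq_eq_Scurv_add (f : EuclideanSpace ℝ (Fin d) → ℝ) (x) :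
    ‖gradient f x‖ ^ 2 = Scurv f x + 2 * f x / d * flatLaplacian f x := by
  rw [Scurv]; ring

theorem flatLaplacian_mul (hU : IsOpen U) (hf : ContDiffOn ℝ 2 f U) (hg : ContDiffOn ℝ 2 g U)
    (hx : x ∈ U) :
    flatLaplacian (fun y => f y * g y) x
      = f x * flatLaplacian g x + 2 * ⟪gradient f x, gradient g x⟫ + g x * flatLaplacian f x := by
  simp only [flatLaplacian, fderiv_fderiv_mul_apply hU hf hg hx, Finset.sum_add_distrib,
    ← Finset.mul_sum, sum_fderiv_mul_fderiv_single]

theorem Scurv_mul (hU : IsOpen U) (hf : ContDiffOn ℝ 2 f U) (hg : ContDiffOn ℝ 2 g U)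
    (hx : x ∈ U) :
    Scurv (fun y => f y * g y) x = g x ^ 2 * Scurv f x + f x ^ 2 * Scurv g x
      + 2 * (1 - 2 / d) * (f x * g x) * ⟪gradient f x, gradient g x⟫ := by
  have hdiff : ∀ {φ : EuclideanSpace ℝ (Fin d) → ℝ}, ContDiffOn ℝ 2 φ U →
      DifferentiableAt ℝ φ x :=
    fun hφ => (hφ.differentiableOn (by norm_num)).differentiableAt (hU.mem_nhds hx)
  simp only [Scurv, flatLaplacian_mul hU hf hg hx, gradient_fun_mul (hdiff hf) (hdiff hg),
    norm_add_sq_real, norm_smul, real_inner_smul_left, real_inner_smul_right, Real.norm_eq_abs,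
    mul_pow, sq_abs, real_inner_comm (gradient g x)]
  ring

end FlatSCurvature

section Normalization

variable {d : ℕ} {U : Set (EuclideanSpace ℝ (Fin d))} {σ : EuclideanSpace ℝ (Fin d) → ℝ}

theorem contDiffOn_inv_sqrt_Scurv (hU : IsOpen U) (hσ : ContDiffOn ℝ ∞ σ U)
    (hS : ∀ x ∈ U, 0 < Scurv σ x) : ContDiffOn ℝ ∞ (fun y => (√(Scurv σ y))⁻¹) U :=
  ((contDiffOn_Scurv hU hσ).sqrt fun y hy => (hS y hy).ne').inv
    fun y hy => (Real.sqrt_pos.2 (hS y hy)).ne'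

theorem exists_Scurv_mul_inv_sqrt_eq_one_add_mul (hU : IsOpen U) (hσ : ContDiffOn ℝ ∞ σ U)
    (hS : ∀ x ∈ U, 0 < Scurv σ x) :
    ∃ A : EuclideanSpace ℝ (Fin d) → ℝ, ContDiffOn ℝ ∞ A U ∧ ∀ x ∈ U,
      Scurv (fun y => σ y * (√(Scurv σ y))⁻¹) x = 1 + σ x * (√(Scurv σ x))⁻¹ * A x := by
  set g : EuclideanSpace ℝ (Fin d) → ℝ := fun y => (√(Scurv σ y))⁻¹
  have hg : ContDiffOn ℝ ∞ g U := contDiffOn_inv_sqrt_Scurv hU hσ hS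
  have hr : ContDiffOn ℝ ∞ (fun y => √(Scurv σ y)) U :=
    (contDiffOn_Scurv hU hσ).sqrt fun y hy => (hS y hy).ne'
  refine ⟨fun y => σ y * Scurv g y * √(Scurv σ y)
      + 2 * (1 - 2 / d) * ⟪gradient σ y, gradient g y⟫,
    ((hσ.mul (contDiffOn_Scurv hU hg)).mul hr).add (contDiffOn_const.mul
      ((contDiffOn_gradient hU hσ).inner ℝ (contDiffOn_gradient hU hg))), fun x hx => ?_⟩
  have hg_sq : g x ^ 2 * Scurv σ x = 1 := by
    rw [inv_pow, Real.sq_sqrt (hS x hx).le, inv_mul_cancel₀ (hS x hx).ne']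
  have hg_mul : g x * √(Scurv σ x) = 1 := inv_mul_cancel₀ (Real.sqrt_pos.2 (hS x hx)).ne'
  rw [Scurv_mul hU (hσ.of_le ENat.LEInfty.out) (hg.of_le ENat.LEInfty.out) hx]
  linear_combination hg_sq - σ x ^ 2 * Scurv g x * hg_mul

end Normalization

section Correction

variable {d : ℕ} {U : Set (EuclideanSpace ℝ (Fin d))} {τ A : EuclideanSpace ℝ (Fin d) → ℝ}

theorem exists_Scurv_correct_eq_one_add_sq_mul (hd : 2 ≤ d) (hU : IsOpen U)
    (hτ : ContDiffOn ℝ ∞ τ U) (hA : ContDiffOn ℝ ∞ A U) (hSτ : ∀ x ∈ U, Scurv τ x = 1 + τ x * A x) :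
    ∃ b : EuclideanSpace ℝ (Fin d) → ℝ, ContDiffOn ℝ ∞ b U ∧ ∀ x ∈ U,
      Scurv (fun y => τ y * (1 - ((d : ℝ) / (4 * ((d : ℝ) - 1))) * (Scurv τ y - 1))) x
        = 1 + τ x ^ 2 * b x := by
  set c : ℝ := d / (4 * (d - 1))
  set h : EuclideanSpace ℝ (Fin d) → ℝ := fun y => 1 - c * (τ y * A y)
  have hh : ContDiffOn ℝ ∞ h U := contDiffOn_const.sub (contDiffOn_const.mul (hτ.mul hA))
  have hc : 4 * c * (1 - 1 / d) = 1 := by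
    have hd₁ : (d : ℝ) - 1 ≠ 0 := by
      have : (2 : ℝ) ≤ d := by exact_mod_cast hd
      linarith
    have hd₀ : (d : ℝ) ≠ 0 := by positivity
    simp only [c]
    field_simp
  refine ⟨fun y => Scurv h y - c * (2 * (1 - 2 / d) * h y
      * (A y * (A y + 2 * flatLaplacian τ y / d) + ⟪gradient τ y, gradient A y⟫)
      + A y ^ 2 * (c + h y)), ?_, fun x hx => ?_⟩
  · have hB : ContDiffOn ℝ ∞ (fun y => A y * (A y + 2 * flatLaplacian τ y / d)
        + ⟪gradient τ y, gradient A y⟫) U :=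
      (hA.mul (hA.add ((contDiffOn_const.mul (contDiffOn_flatLaplacian hU hτ)).div_const _))).add
        ((contDiffOn_gradient hU hτ).inner ℝ (contDiffOn_gradient hU hA))
    exact (contDiffOn_Scurv hU hh).sub (contDiffOn_const.mul
      (((contDiffOn_const.mul hh).mul hB).add ((hA.pow 2).mul (contDiffOn_const.add hh))))
  · have hdiff : ∀ {φ : EuclideanSpace ℝ (Fin d) → ℝ}, ContDiffOn ℝ ∞ φ U →
        DifferentiableAt ℝ φ x :=
      fun hφ => (hφ.differentiableOn (by simp)).differentiableAt (hU.mem_nhds hx)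
    have h_eq : (fun y => τ y * (1 - c * (Scurv τ y - 1))) =ᶠ[𝓝 x] fun y => τ y * h y := by
      filter_upwards [hU.mem_nhds hx] with y hy
      simp only [h, hSτ y hy, add_sub_cancel_left]
    have hgrad_h : gradient h x = -(c • (τ x • gradient A x + A x • gradient τ x)) := by
      rw [← gradient_fun_mul (hdiff hτ) (hdiff hA)]
      exact gradient_one_sub_const_mul c ((hdiff hτ).mul (hdiff hA))
    rw [Scurv_congr_of_eventuallyEq h_eq,
      Scurv_mul hU (hτ.of_le ENat.LEInfty.out) (hh.of_le ENat.LEInfty.out) hx, hgrad_h]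
    simp only [inner_neg_right, real_inner_smul_right, inner_add_right, real_inner_self_eq_norm_sq,
      norm_gradient_sq_eq_Scurv_add, hSτ x hx, h]
    linear_combination -(τ x * A x * (1 - c * (τ x * A x))) * hc

end Correction

/-- with `σ̂ := σ/√(S(σ))` and
`σ' := σ̂·(1 − (d/(4(d−1)))·(S(σ̂) − 1))`, one has `S(σ') = 1 + σ²·b` for some smooth
`b`, i.e. `S(σ') − 1` vanishes to second order along `Z`. -/
theorem statement5 (d : ℕ) (hd : 3 ≤ d)
    (U Z : Set (EuclideanSpace ℝ (Fin d))) (hU : IsOpen U)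
    (σ : EuclideanSpace ℝ (Fin d) → ℝ) (hσ : IsDefiningFn σ U Z)
    (hS : ∀ x ∈ U, 0 < Scurv σ x)
    (σhat σ' : EuclideanSpace ℝ (Fin d) → ℝ)
    (hσhat : σhat = fun x => σ x / Real.sqrt (Scurv σ x))
    (hσ' : σ' = fun x =>
      σhat x * (1 - ((d : ℝ) / (4 * ((d : ℝ) - 1))) * (Scurv σhat x - 1))) :
    ∃ b : EuclideanSpace ℝ (Fin d) → ℝ, ContDiffOn ℝ (⊤ : ℕ∞) b U ∧
      ∀ x ∈ U, Scurv σ' x = 1 + σ x ^ 2 * b x := by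
  obtain ⟨hσU, -, -⟩ := hσ
  simp only [div_eq_mul_inv] at hσhat
  subst hσhat hσ'
  have hg := contDiffOn_inv_sqrt_Scurv hU hσU hS
  obtain ⟨A, hA, hSσhat⟩ := exists_Scurv_mul_inv_sqrt_eq_one_add_mul hU hσU hS
  obtain ⟨b, hb, hSσ'⟩ :=
    exists_Scurv_correct_eq_one_add_sq_mul (by omega) hU (hσU.mul hg) hA hSσhat
  refine ⟨fun y => (√(Scurv σ y))⁻¹ ^ 2 * b y, (hg.pow 2).mul hb, fun x hx => ?_⟩
  rw [hSσ' x hx]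
  ring
end

section
/- Let d ≥ 3, let U ⊆ ℝ^d be open, and let σ be a smooth function on U with S(σ) ≡ 0 on U. If p ∈ U satisfies σ(p) = 0 and Δσ(p) ≠ 0, then ∇σ(p) = 0, the Hessian of σ at p equals (Δσ(p)/d) times the identity, and p is an isolated zero of σ. (Flat-background case of the statement that when the S-curvature vanishes identically, only isolated zeros of the scale are possible.) -/
open RealInnerProductSpace

/-!
At a zero `p` of `σ`, `S(σ) = 0` reads `‖∇σ(p)‖² = 0`. Differentiating `‖∇σ‖² = σ · (2/d) Δσ`
twice at `p`, where both `σ` and `∇σ` vanish, gives `‖H v‖² = λ ⟪v, H v⟫` for the Hessian `H`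
and `λ = Δσ(p)/d`; since also `tr H = Δσ(p) = d λ`, this forces `H = λ I`. So `∇σ` has invertible
derivative at `p`, hence no other zero near `p`, while every zero of `σ` in `U` is a zero of `∇σ`.
-/

open Filter Topology Module

section SecondDerivative

variable {E F : Type*} [NormedAddCommGroup E] [NormedSpace ℝ E]
  [NormedAddCommGroup F] [InnerProductSpace ℝ F] {p : E}

lemma ContDiffAt.differentiableAt_fderiv_apply {f : E → F} (hf : ContDiffAt ℝ 2 f p) (w : E) :
    DifferentiableAt ℝ (fun x => fderiv ℝ f x w) p :=
  ((hf.fderiv_right le_rfl).differentiableAt one_ne_zero).clm_apply (differentiableAt_const w)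

lemma ContDiffAt.eventually_differentiableAt {f : E → F} (hf : ContDiffAt ℝ 2 f p) :
    ∀ᶠ x in 𝓝 p, DifferentiableAt ℝ f x :=
  (hf.eventually (by simp)).mono fun _ hx => hx.differentiableAt two_ne_zero

lemma fderiv_fderiv_norm_sq_apply_of_eq_zero {G : E → F} (hG : ContDiffAt ℝ 2 G p)
    (hp : G p = 0) (v w : E) :
    fderiv ℝ (fun x => fderiv ℝ (fun y => ‖G y‖ ^ 2) x w) p v
      = 2 * ⟪fderiv ℝ G p v, fderiv ℝ G p w⟫ := by
  have hfirst : (fun x => fderiv ℝ (fun y => ‖G y‖ ^ 2) x w)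
      =ᶠ[𝓝 p] fun x => 2 * ⟪G x, fderiv ℝ G x w⟫ := by
    filter_upwards [hG.eventually_differentiableAt] with x hx
    simp [hx.hasFDerivAt.norm_sq.fderiv]
  have hsecond := ((hG.differentiableAt two_ne_zero).hasFDerivAt.inner ℝ
    (hG.differentiableAt_fderiv_apply w).hasFDerivAt).const_mul 2
  rw [hfirst.fderiv_eq, hsecond.fderiv]
  simp [hp]

lemma fderiv_fderiv_mul_apply_of_eq_zero {f g : E → ℝ} (hf : ContDiffAt ℝ 2 f p)
    (hg : ContDiffAt ℝ 2 g p) (hfp : f p = 0) (hf'p : fderiv ℝ f p = 0) (v w : E) :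
    fderiv ℝ (fun x => fderiv ℝ (fun y => f y * g y) x w) p v
      = fderiv ℝ (fun x => fderiv ℝ f x w) p v * g p := by
  have hfirst : (fun x => fderiv ℝ (fun y => f y * g y) x w)
      =ᶠ[𝓝 p] fun x => f x * fderiv ℝ g x w + g x * fderiv ℝ f x w := by
    filter_upwards [hf.eventually_differentiableAt, hg.eventually_differentiableAt] with x hfx hgx
    rw [fderiv_fun_mul hfx hgx]
    simp
  have hsecond : HasFDerivAt (fun x => f x * fderiv ℝ g x w + g x * fderiv ℝ f x w) _ p :=
    ((hf.differentiableAt two_ne_zero).hasFDerivAt.mul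
      (hg.differentiableAt_fderiv_apply w).hasFDerivAt).add
    ((hg.differentiableAt two_ne_zero).hasFDerivAt.mul
      (hf.differentiableAt_fderiv_apply w).hasFDerivAt)
  rw [hfirst.fderiv_eq, hsecond.fderiv]
  simp [hfp, hf'p, mul_comm]

end SecondDerivative

/-- `‖M v - c • v‖² = c (c ‖v‖² - ⟪v, M v⟫)` sums to `c (n c - tr M) = 0` over an orthonormal
basis. -/
lemma LinearMap.eq_smul_id_of_norm_sq_eq_inner {E : Type*} [NormedAddCommGroup E]
    [InnerProductSpace ℝ E] [FiniteDimensional ℝ E] {M : E →ₗ[ℝ] E} {c : ℝ}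
    (hM : ∀ v, ‖M v‖ ^ 2 = c * ⟪v, M v⟫) (htr : M.trace ℝ E = finrank ℝ E * c) :
    M = c • LinearMap.id := by
  set b := stdOrthonormalBasis ℝ E
  have hdefect : ∀ v, ‖M v - c • v‖ ^ 2 = c * (c * ‖v‖ ^ 2 - ⟪v, M v⟫) := by
    intro v
    rw [norm_sub_sq_real, hM, norm_smul, real_inner_smul_right, real_inner_comm, mul_pow,
      Real.norm_eq_abs, sq_abs]
    ring
  have hsum : ∑ i, ‖M (b i) - c • b i‖ ^ 2 = 0 := by
    simp only [hdefect, b.orthonormal.1, one_pow, mul_one]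
    rw [← Finset.mul_sum, Finset.sum_sub_distrib, ← M.trace_eq_sum_inner b, htr,
      Finset.sum_const, Finset.card_univ, Fintype.card_fin, nsmul_eq_mul]
    ring
  have hbasis : ∀ i, M (b i) = c • b i := fun i => by
    have := (Finset.sum_eq_zero_iff_of_nonneg fun j _ => sq_nonneg ‖M (b j) - c • b j‖).1 hsum i
      (Finset.mem_univ i)
    simpa [sub_eq_zero] using this
  exact b.toBasis.ext fun i => by simpa using hbasis i

section Gradient

variable {E : Type*} [NormedAddCommGroup E] [InnerProductSpace ℝ E] [CompleteSpace E]
  {σ : E → ℝ} {x : E}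

lemma ContDiffAt.gradient {n : WithTop ℕ∞} (h : ContDiffAt ℝ (n + 1) σ x) :
    ContDiffAt ℝ n (gradient σ) x :=
  (InnerProductSpace.toDual ℝ E).symm.toContinuousLinearEquiv.contDiff.comp_contDiffAt x
    (h.fderiv_right le_rfl)

lemma fderiv_eq_zero_of_gradient_eq_zero (h : gradient σ x = 0) : fderiv ℝ σ x = 0 := by
  rw [← toDual_gradient, h, map_zero]

lemma fderiv_fderiv_apply_eq_inner_fderiv_gradient (h : DifferentiableAt ℝ (gradient σ) x)
    (v w : E) : fderiv ℝ (fun y => fderiv ℝ σ y v) x w = ⟪v, fderiv ℝ (gradient σ) x w⟫ := by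
  have hfun : (fun y => fderiv ℝ σ y v) = fun y => innerSL ℝ v (gradient σ y) := by
    funext y
    rw [innerSL_apply_apply, real_inner_comm, inner_gradient_left]
  have hcomp : HasFDerivAt (fun y => innerSL ℝ v (gradient σ y))
      ((innerSL ℝ v).comp (fderiv ℝ (gradient σ) x)) x :=
    (innerSL ℝ v).hasFDerivAt.comp x h.hasFDerivAt
  rw [hfun, hcomp.fderiv]
  rfl

end Gradient

section FlatSCurvature

variable {d : ℕ} {σ : EuclideanSpace ℝ (Fin d) → ℝ} {x : EuclideanSpace ℝ (Fin d)}

lemma flatLaplacian_eq_trace (h : DifferentiableAt ℝ (gradient σ) x) :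
    flatLaplacian σ x = (fderiv ℝ (gradient σ) x :
      EuclideanSpace ℝ (Fin d) →ₗ[ℝ] EuclideanSpace ℝ (Fin d)).trace ℝ _ := by
  rw [LinearMap.trace_eq_sum_inner _ (EuclideanSpace.basisFun (Fin d) ℝ)]
  simp [flatLaplacian, fderiv_fderiv_apply_eq_inner_fderiv_gradient h]

lemma ContDiffAt.flatLaplacian {n : WithTop ℕ∞} (h : ContDiffAt ℝ (n + 2) σ x) :
    ContDiffAt ℝ n (flatLaplacian σ) x :=
  ContDiffAt.sum fun i _ =>
    (((h.fderiv_right (by rw [add_assoc]; norm_num)).clm_apply contDiffAt_const).fderiv_right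
      le_rfl).clm_apply contDiffAt_const

lemma norm_gradient_sq_eq_of_scurv_eq_zero (h : Scurv σ x = 0) :
    ‖gradient σ x‖ ^ 2 = σ x * (2 / d * flatLaplacian σ x) := by
  rw [Scurv] at h
  linear_combination h

lemma gradient_eq_zero_of_scurv_eq_zero (h : Scurv σ x = 0) (h0 : σ x = 0) :
    gradient σ x = 0 := by
  simpa [h0] using norm_gradient_sq_eq_of_scurv_eq_zero h

lemma norm_fderiv_gradient_sq_eq_of_scurv_eq_zero (hσ : ContDiffAt ℝ 4 σ x)
    (hS : ∀ᶠ y in 𝓝 x, Scurv σ y = 0) (hx : σ x = 0) (v : EuclideanSpace ℝ (Fin d)) :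
    ‖fderiv ℝ (gradient σ) x v‖ ^ 2
      = flatLaplacian σ x / d * ⟪v, fderiv ℝ (gradient σ) x v⟫ := by
  have hG : ContDiffAt ℝ 2 (gradient σ) x := (hσ.of_le (by norm_num)).gradient
  have hΔ : ContDiffAt ℝ 2 (fun y => 2 / d * flatLaplacian σ y) x :=
    contDiffAt_const.mul (hσ.flatLaplacian (n := 2))
  have hGx := gradient_eq_zero_of_scurv_eq_zero hS.self_of_nhds hx
  have hidentity : (fun z => ‖gradient σ z‖ ^ 2)
      =ᶠ[𝓝 x] fun z => σ z * (2 / d * flatLaplacian σ z) :=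
    hS.mono fun _ hy => norm_gradient_sq_eq_of_scurv_eq_zero hy
  have hfirst : (fun y => fderiv ℝ (fun z => ‖gradient σ z‖ ^ 2) y v)
      =ᶠ[𝓝 x] fun y => fderiv ℝ (fun z => σ z * (2 / d * flatLaplacian σ z)) y v :=
    hidentity.fderiv.mono fun _ hy => DFunLike.congr_fun hy v
  have hsecond := DFunLike.congr_fun (hfirst.fderiv_eq (𝕜 := ℝ)) v
  rw [fderiv_fderiv_norm_sq_apply_of_eq_zero hG hGx, fderiv_fderiv_mul_apply_of_eq_zero
    (hσ.of_le (by norm_num)) hΔ hx (fderiv_eq_zero_of_gradient_eq_zero hGx),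
    fderiv_fderiv_apply_eq_inner_fderiv_gradient (hG.differentiableAt two_ne_zero),
    real_inner_self_eq_norm_sq] at hsecond
  linear_combination hsecond / 2

end FlatSCurvature

theorem statement6_general (d : ℕ)
    (U : Set (EuclideanSpace ℝ (Fin d))) (hU : IsOpen U)
    (σ : EuclideanSpace ℝ (Fin d) → ℝ) (hσ : ContDiffOn ℝ (⊤ : ℕ∞) σ U)
    (hS : ∀ x ∈ U, Scurv σ x = 0)
    (p : EuclideanSpace ℝ (Fin d)) (hp : p ∈ U) (hp0 : σ p = 0)
    (hΔ : flatLaplacian σ p ≠ 0) :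
    gradient σ p = 0 ∧
    (∀ v w : EuclideanSpace ℝ (Fin d),
      fderiv ℝ (fun y => fderiv ℝ σ y v) p w = (flatLaplacian σ p / d) * ⟪v, w⟫) ∧
    ∃ ε > (0 : ℝ), ∀ x ∈ Metric.ball p ε ∩ U, σ x = 0 → x = p := by
  have hd : (d : ℝ) ≠ 0 :=
    Nat.cast_ne_zero.2 (by rintro rfl; exact hΔ (Fintype.sum_empty _))
  have hσp : ContDiffAt ℝ 4 σ p :=
    (hσ.contDiffAt (hU.mem_nhds hp)).of_le (WithTop.coe_le_coe.2 le_top)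
  have hG : DifferentiableAt ℝ (gradient σ) p :=
    (hσp.gradient (n := 3)).differentiableAt (by norm_num)
  set c := flatLaplacian σ p / d
  have hH : ∀ v, fderiv ℝ (gradient σ) p v = c • v := by
    refine LinearMap.congr_fun (LinearMap.eq_smul_id_of_norm_sq_eq_inner
      (norm_fderiv_gradient_sq_eq_of_scurv_eq_zero hσp
        (eventually_of_mem (hU.mem_nhds hp) hS) hp0) ?_)
    rw [← flatLaplacian_eq_trace hG, finrank_euclideanSpace_fin]
    field_simp
  have hGp := gradient_eq_zero_of_scurv_eq_zero (hS p hp) hp0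
  refine ⟨hGp, fun v w => ?_, ?_⟩
  · rw [fderiv_fderiv_apply_eq_inner_fderiv_gradient hG, hH, real_inner_smul_right]
  · have hne : ∀ᶠ x in 𝓝[≠] p, gradient σ x ≠ 0 :=
      hG.hasFDerivAt.eventually_ne (antilipschitzWith_iff_exists_mul_le_norm.2
        ⟨|c|, abs_pos.2 (div_ne_zero hΔ hd), fun v => by rw [hH, norm_smul, Real.norm_eq_abs]⟩)
    obtain ⟨ε, hε, hball⟩ := Metric.eventually_nhds_iff_ball.1 (eventually_nhdsWithin_iff.1 hne)
    refine ⟨ε, hε, fun x ⟨hxε, hxU⟩ hx0 => by_contra fun hxp =>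
      hball x hxε hxp (gradient_eq_zero_of_scurv_eq_zero (hS x hxU) hx0)⟩

/-- if `S(σ) ≡ 0` on `U` and `p` is a zero of `σ` with `Δσ(p) ≠ 0`, then
`∇σ(p) = 0`, the Hessian of `σ` at `p` is `(Δσ(p)/d)` times the identity bilinear form,
and `p` is an isolated zero of `σ`. -/
theorem statement6 (d : ℕ) (hd : 3 ≤ d)
    (U : Set (EuclideanSpace ℝ (Fin d))) (hU : IsOpen U)
    (σ : EuclideanSpace ℝ (Fin d) → ℝ) (hσ : ContDiffOn ℝ (⊤ : ℕ∞) σ U)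
    (hS : ∀ x ∈ U, Scurv σ x = 0)
    (p : EuclideanSpace ℝ (Fin d)) (hp : p ∈ U) (hp0 : σ p = 0)
    (hΔ : flatLaplacian σ p ≠ 0) :
    gradient σ p = 0 ∧
    (∀ v w : EuclideanSpace ℝ (Fin d),
      fderiv ℝ (fun y => fderiv ℝ σ y v) p w = (flatLaplacian σ p / d) * ⟪v, w⟫) ∧
    ∃ ε > (0 : ℝ), ∀ x ∈ Metric.ball p ε ∩ U, σ x = 0 → x = p :=
  statement6_general d U hU σ hσ hS p hp hp0 hΔ
end
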